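/- Let T : [0,1] → [0,1] be defined by T(x) = i(i+1)·x − i for x ∈ [1/(i+1), 1/i), i = 1, 2, …, with T(0) = 0 and T(1) = 1, let h : [0,1] → [0,1] be h(x) = 1 − (1−x)², and let τ = h⁻¹ ∘ T ∘ h (where h⁻¹(y) = 1 − √(1−y)). Then the probability measure μ on [0,1] with density g(x) = 2(1−x) with respect to Lebesgue measure is τ-invariant: ∫_{τ⁻¹(A)} 2(1−x) dλ(x) = ∫_A 2(1−x) dλ(x) for every Borel set A ⊆ [0,1]. -/

import Mathlib

open MeasureTheory Set Filter

/-- Lebesgue measure on the unit interval `I = [0,1]`. -/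
noncomputable def lam : MeasureTheory.Measure ℝ := MeasureTheory.volume.restrict (Set.Icc 0 1)

/-- The conjugating homeomorphism `h x = 1 − (1−x)²` of `[0,1]`. -/
noncomputable def hconj : ℝ → ℝ := fun x => 1 - (1 - x) ^ 2

/-- Its inverse `h⁻¹ y = 1 − √(1−y)`. -/
noncomputable def hconjInv : ℝ → ℝ := fun y => 1 - Real.sqrt (1 - y)

/-! ### Auxiliary lemmas -/

lemma hconj_mem {x : ℝ} (hx : x ∈ Set.Icc (0:ℝ) 1) : hconj x ∈ Set.Icc (0:ℝ) 1 := by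
  obtain ⟨h0, h1⟩ := hx
  constructor <;> simp only [hconj] <;> nlinarith

lemma hconjInv_mem {y : ℝ} (hy : y ∈ Set.Icc (0:ℝ) 1) : hconjInv y ∈ Set.Icc (0:ℝ) 1 := by
  obtain ⟨h0, h1⟩ := hy
  have hs : Real.sqrt (1 - y) ≤ 1 := by
    have h := Real.sqrt_le_sqrt (show (1:ℝ) - y ≤ 1 by linarith)
    simpa using h
  constructor
  · simp only [hconjInv]; linarith
  · simp only [hconjInv]; have := Real.sqrt_nonneg (1 - y); linarith

lemma hconjInv_hconj {x : ℝ} (hx : x ∈ Set.Icc (0:ℝ) 1) : hconjInv (hconj x) = x := by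
  obtain ⟨h0, h1⟩ := hx
  simp only [hconjInv, hconj]
  rw [show 1 - (1 - (1 - x)^2) = (1-x)^2 by ring, Real.sqrt_sq (by linarith)]
  ring

lemma hconj_hconjInv {y : ℝ} (hy : y ≤ 1) : hconj (hconjInv y) = y := by
  simp only [hconjInv, hconj]
  rw [show 1 - (1 - Real.sqrt (1 - y)) = Real.sqrt (1 - y) by ring,
    Real.sq_sqrt (by linarith)]
  ring

lemma hconj_hasDerivAt (x : ℝ) : HasDerivAt hconj (2 * (1 - x)) x := by
  have h1 : HasDerivAt (fun x : ℝ => 1 - x) (-1) x := (hasDerivAt_id x).const_sub 1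
  have h2 : HasDerivAt (fun x : ℝ => (1 - x) ^ 2) (2 * (1 - x) * (-1)) x := by
    simpa using (h1.fun_pow 2)
  have h3 := h2.const_sub 1
  refine h3.congr_deriv ?_
  ring

lemma hconjInv_hasDerivAt {y : ℝ} (hy : y < 1) :
    HasDerivAt hconjInv (1 / (2 * Real.sqrt (1 - y))) y := by
  have h1 : HasDerivAt (fun y : ℝ => 1 - y) (-1) y := (hasDerivAt_id y).const_sub 1
  have h2 : HasDerivAt Real.sqrt (1 / (2 * Real.sqrt (1 - y))) (1 - y) :=
    Real.hasDerivAt_sqrt (by linarith)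
  have h3 : HasDerivAt (fun y : ℝ => Real.sqrt (1 - y))
      (1 / (2 * Real.sqrt (1 - y)) * (-1)) y := h2.comp y h1
  have h4 := h3.const_sub 1
  refine h4.congr_deriv ?_
  ring

lemma hconj_injOn : Set.InjOn hconj (Set.Icc 0 1) := by
  intro a ha b hb hab
  simp only [hconj] at hab
  obtain ⟨ha0, ha1⟩ := ha; obtain ⟨hb0, hb1⟩ := hb
  nlinarith [sq_nonneg (a - b), sq_nonneg (a + b - 2)]

lemma hconjInv_injOn : Set.InjOn hconjInv (Set.Icc 0 1) := by
  intro a ha b hb hab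
  simp only [hconjInv, sub_right_inj] at hab
  obtain ⟨ha0, ha1⟩ := ha; obtain ⟨hb0, hb1⟩ := hb
  have := congrArg (fun t => t ^ 2) hab
  simp only [Real.sq_sqrt (by linarith : (0:ℝ) ≤ 1 - a),
    Real.sq_sqrt (by linarith : (0:ℝ) ≤ 1 - b)] at this
  linarith

lemma affine_preimage_volume (a b : ℝ) (ha : a ≠ 0) (s : Set ℝ) :
    volume ((fun x => a * x - b) ⁻¹' s) = ENNReal.ofReal |a⁻¹| * volume s := by
  have h1 : (fun x : ℝ => a * x - b) ⁻¹' s = (a * ·) ⁻¹' ((fun y => y + (-b)) ⁻¹' s) := by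
    ext x; simp [sub_eq_add_neg]
  rw [h1, Real.volume_preimage_mul_left ha, measure_preimage_add_right]

lemma telescoping : (∑' n : ℕ, ENNReal.ofReal (1 / (((n:ℝ) + 1) * ((n:ℝ) + 2)))) = 1 := by
  have hf : ∀ n : ℕ, (0:ℝ) ≤ 1 / (((n:ℝ) + 1) * ((n:ℝ) + 2)) := by
    intro n; positivity
  have hsum : HasSum (fun n : ℕ => 1 / (((n:ℝ) + 1) * ((n:ℝ) + 2))) 1 := by
    rw [hasSum_iff_tendsto_nat_of_nonneg hf]
    have hps : ∀ n : ℕ, (∑ i ∈ Finset.range n, 1 / (((i:ℝ) + 1) * ((i:ℝ) + 2)))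
        = 1 - 1 / ((n:ℝ) + 1) := by
      intro n
      induction n with
      | zero => simp
      | succ k ih =>
        rw [Finset.sum_range_succ, ih]
        push_cast
        have h1 : ((k:ℝ) + 1) ≠ 0 := by positivity
        have h2 : ((k:ℝ) + 2) ≠ 0 := by positivity
        field_simp
        ring
    simp_rw [hps]
    have h1 : Tendsto (fun n : ℕ => 1 / ((n:ℝ) + 1)) atTop (nhds 0) :=
      tendsto_one_div_add_atTop_nhds_zero_nat
    have h2 := Tendsto.sub (tendsto_const_nhds (x := (1:ℝ))) h1
    simpa using h2
  rw [← ENNReal.ofReal_tsum_of_nonneg hf hsum.summable, hsum.tsum_eq, ENNReal.ofReal_one]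

lemma exists_piece {y : ℝ} (hy : y ∈ Set.Ioo (0:ℝ) 1) :
    ∃ i : ℕ, 1 ≤ i ∧ y ∈ Set.Ico (1 / ((i:ℝ) + 1)) (1 / (i:ℝ)) := by
  obtain ⟨h0, h1⟩ := hy
  have hinv : 1 < 1 / y := by rw [lt_div_iff₀ h0]; linarith
  set z : ℝ := 1 / y with hz
  refine ⟨(⌈z⌉₊ - 1 : ℕ), ?_, ?_, ?_⟩
  · have : 2 ≤ ⌈z⌉₊ := by
      have := Nat.lt_ceil.mpr (show ((1:ℕ):ℝ) < z by exact_mod_cast hinv)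
      omega
    omega
  · have h2 : 2 ≤ ⌈z⌉₊ := by
      have := Nat.lt_ceil.mpr (show ((1:ℕ):ℝ) < z by exact_mod_cast hinv); omega
    have hcast : ((⌈z⌉₊ - 1 : ℕ) : ℝ) + 1 = (⌈z⌉₊ : ℝ) := by
      have : (⌈z⌉₊ - 1 : ℕ) + 1 = ⌈z⌉₊ := by omega
      rw [← this]; push_cast; ring
    rw [hcast, div_le_iff₀ (by positivity)]
    have hle : z ≤ (⌈z⌉₊ : ℝ) := Nat.le_ceil z
    have hzy : z * y = 1 := by rw [hz]; field_simp
    nlinarith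
  · have h2 : 2 ≤ ⌈z⌉₊ := by
      have := Nat.lt_ceil.mpr (show ((1:ℕ):ℝ) < z by exact_mod_cast hinv); omega
    have hlt : ((⌈z⌉₊ - 1 : ℕ) : ℝ) < z := by
      have h3 : (⌈z⌉₊ : ℝ) < z + 1 := Nat.ceil_lt_add_one (by linarith)
      have : ((⌈z⌉₊ - 1 : ℕ) : ℝ) = (⌈z⌉₊ : ℝ) - 1 := by
        have : ((⌈z⌉₊ - 1 : ℕ) : ℝ) + 1 = (⌈z⌉₊ : ℝ) := by
          have h4 : (⌈z⌉₊ - 1 : ℕ) + 1 = ⌈z⌉₊ := by omega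
          rw [← h4]; push_cast; ring
        linarith
      linarith
    have hipos : (0:ℝ) < ((⌈z⌉₊ - 1 : ℕ) : ℝ) := by
      have : 1 ≤ ⌈z⌉₊ - 1 := by omega
      exact_mod_cast Nat.lt_of_lt_of_le Nat.zero_lt_one this
    rw [lt_div_iff₀ hipos]
    calc y * ((⌈z⌉₊ - 1 : ℕ) : ℝ) < y * z := by nlinarith
    _ = 1 := by rw [hz]; field_simp

lemma T_mem (T : ℝ → ℝ) (hT0 : T 0 = 0) (hT1 : T 1 = 1)
    (hT : ∀ i : ℕ, 1 ≤ i → ∀ x ∈ Set.Ico (1 / ((i:ℝ) + 1)) (1 / (i:ℝ)),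
      T x = (i:ℝ) * ((i:ℝ) + 1) * x - (i:ℝ))
    {y : ℝ} (hy : y ∈ Set.Icc (0:ℝ) 1) : T y ∈ Set.Icc (0:ℝ) 1 := by
  obtain ⟨h0, h1⟩ := hy
  rcases eq_or_lt_of_le h0 with h0' | h0'
  · rw [← h0', hT0]; exact ⟨le_refl 0, by norm_num⟩
  rcases eq_or_lt_of_le h1 with h1' | h1'
  · rw [h1', hT1]; exact ⟨by norm_num, le_refl 1⟩
  obtain ⟨i, hi1, hxlo, hxhi⟩ := exists_piece ⟨h0', h1'⟩
  have hTx : T y = (i:ℝ) * ((i:ℝ) + 1) * y - (i:ℝ) := hT i hi1 y ⟨hxlo, hxhi⟩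
  have hipos : (0:ℝ) < (i:ℝ) := by exact_mod_cast hi1
  rw [div_le_iff₀ (show (0:ℝ) < (i:ℝ)+1 by linarith)] at hxlo
  rw [lt_div_iff₀ hipos] at hxhi
  rw [hTx]
  constructor
  · nlinarith
  · nlinarith

lemma T_pieces (T : ℝ → ℝ)
    (hT : ∀ i : ℕ, 1 ≤ i → ∀ x ∈ Set.Ico (1 / ((i:ℝ) + 1)) (1 / (i:ℝ)),
      T x = (i:ℝ) * ((i:ℝ) + 1) * x - (i:ℝ))
    (B : Set ℝ) :
    T ⁻¹' B ∩ Set.Ioo 0 1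
      = ⋃ n : ℕ, (fun x => (((n:ℝ)+1) * ((n:ℝ)+2)) * x - ((n:ℝ)+1)) ⁻¹'
          (B ∩ Set.Ico 0 1) := by
  ext x
  simp only [Set.mem_inter_iff, Set.mem_preimage, Set.mem_iUnion, Set.mem_Ico]
  constructor
  · rintro ⟨hxB, hxI⟩
    obtain ⟨i, hi1, hxlo, hxhi⟩ := exists_piece hxI
    refine ⟨i - 1, ?_⟩
    have hic : ((i - 1 : ℕ) : ℝ) + 1 = (i : ℝ) := by
      have : (i - 1 : ℕ) + 1 = i := by omega
      exact_mod_cast congrArg (Nat.cast : ℕ → ℝ) this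
    have hic2 : ((i - 1 : ℕ) : ℝ) + 2 = (i : ℝ) + 1 := by linarith
    rw [hic, hic2]
    have hTx : T x = (i:ℝ) * ((i:ℝ) + 1) * x - (i:ℝ) := hT i hi1 x ⟨hxlo, hxhi⟩
    have hipos : (0:ℝ) < (i:ℝ) := by exact_mod_cast hi1
    have h1 : (0:ℝ) ≤ (i:ℝ) * ((i:ℝ)+1) * x - (i:ℝ) := by
      rw [div_le_iff₀ (show (0:ℝ) < (i:ℝ)+1 by linarith)] at hxlo
      nlinarith
    have h2 : (i:ℝ) * ((i:ℝ)+1) * x - (i:ℝ) < 1 := by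
      rw [lt_div_iff₀ hipos] at hxhi
      nlinarith
    exact ⟨hTx ▸ hxB, h1, h2⟩
  · rintro ⟨n, hmem, hlo, hhi⟩
    set i : ℕ := n + 1 with hi
    have hic : ((n:ℝ) + 1) = (i:ℝ) := by push_cast [hi]; ring
    have hic2 : ((n:ℝ) + 2) = (i:ℝ) + 1 := by push_cast [hi]; ring
    rw [hic, hic2] at hmem hlo hhi
    have hipos : (0:ℝ) < (i:ℝ) := by positivity
    have hxlo : 1 / ((i:ℝ) + 1) ≤ x := by
      rw [div_le_iff₀ (by linarith)]
      nlinarith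
    have hxhi : x < 1 / (i:ℝ) := by
      rw [lt_div_iff₀ hipos]
      nlinarith
    have hTx : T x = (i:ℝ) * ((i:ℝ) + 1) * x - (i:ℝ) :=
      hT i (by omega) x ⟨hxlo, hxhi⟩
    refine ⟨by rw [hTx]; exact hmem, ?_, ?_⟩
    · calc (0:ℝ) < 1 / ((i:ℝ)+1) := by positivity
      _ ≤ x := hxlo
    · calc x < 1 / (i:ℝ) := hxhi
      _ ≤ 1 := by rw [div_le_one hipos]; exact_mod_cast Nat.one_le_iff_ne_zero.mpr (by omega)

lemma piece_subset (n : ℕ) (B : Set ℝ) :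
    (fun x => (((n:ℝ)+1) * ((n:ℝ)+2)) * x - ((n:ℝ)+1)) ⁻¹' (B ∩ Set.Ico 0 1)
      ⊆ Set.Ico (1 / ((n:ℝ)+2)) (1 / ((n:ℝ)+1)) := by
  intro x hx
  simp only [Set.mem_preimage, Set.mem_inter_iff, Set.mem_Ico] at hx
  obtain ⟨-, hlo, hhi⟩ := hx
  constructor
  · rw [div_le_iff₀ (by positivity)]
    nlinarith [hlo, show (0:ℝ) < (n:ℝ)+1 by positivity]
  · rw [lt_div_iff₀ (by positivity)]
    nlinarith [hhi, show (0:ℝ) < (n:ℝ)+2 by positivity]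

lemma T_invariance (T : ℝ → ℝ)
    (hT : ∀ i : ℕ, 1 ≤ i → ∀ x ∈ Set.Ico (1 / ((i:ℝ) + 1)) (1 / (i:ℝ)),
      T x = (i:ℝ) * ((i:ℝ) + 1) * x - (i:ℝ))
    (B : Set ℝ) (hB : MeasurableSet B) (hBsub : B ⊆ Set.Icc (0:ℝ) 1) :
    MeasurableSet (T ⁻¹' B ∩ Set.Icc 0 1) ∧
      volume (T ⁻¹' B ∩ Set.Icc 0 1) = volume B := by
  set P : ℕ → Set ℝ := fun n =>
    (fun x => (((n:ℝ)+1) * ((n:ℝ)+2)) * x - ((n:ℝ)+1)) ⁻¹' (B ∩ Set.Ico 0 1) with hP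
  set C : Set ℝ := T ⁻¹' B ∩ Set.Icc 0 1 with hC
  have hPm : ∀ n, MeasurableSet (P n) := by
    intro n
    exact ((measurable_id.const_mul _).sub measurable_const)
      (hB.inter measurableSet_Ico)
  have hUC : (⋃ n, P n) ⊆ C := by
    intro x hx
    obtain ⟨n, hn⟩ := Set.mem_iUnion.mp hx
    have hx2 : x ∈ T ⁻¹' B ∩ Set.Ioo 0 1 := by
      rw [T_pieces T hT B]
      exact Set.mem_iUnion.mpr ⟨n, hn⟩
    exact ⟨hx2.1, Set.Ioo_subset_Icc_self hx2.2⟩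
  have hdiff : C \ (⋃ n, P n) ⊆ ({0, 1} : Set ℝ) := by
    intro x hx
    by_contra hx01
    have hxIoo : x ∈ Set.Ioo (0:ℝ) 1 := by
      obtain ⟨⟨-, hx0, hx1⟩, -⟩ := hx
      simp only [Set.mem_insert_iff, Set.mem_singleton_iff, not_or] at hx01
      exact ⟨lt_of_le_of_ne hx0 (Ne.symm hx01.1), lt_of_le_of_ne hx1 hx01.2⟩
    have : x ∈ ⋃ n, P n := by
      rw [← T_pieces T hT B]
      exact ⟨hx.1.1, hxIoo⟩
    exact hx.2 this
  have hCeq : C = (⋃ n, P n) ∪ (C \ ⋃ n, P n) := (Set.union_diff_cancel hUC).symm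
  have hdiffm : MeasurableSet (C \ ⋃ n, P n) :=
    (Set.Finite.subset (Set.toFinite ({0,1} : Set ℝ)) hdiff).measurableSet
  have hdiff0 : volume (C \ ⋃ n, P n) = 0 :=
    measure_mono_null hdiff ((Set.toFinite ({0,1} : Set ℝ)).measure_zero volume)
  have hCm : MeasurableSet C := by
    rw [hCeq]; exact (MeasurableSet.iUnion hPm).union hdiffm
  refine ⟨hCm, ?_⟩
  have hvolC : volume C = volume (⋃ n, P n) := by
    refine le_antisymm ?_ (measure_mono hUC)
    calc volume C ≤ volume (⋃ n, P n) + volume (C \ ⋃ n, P n) := by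
          conv_lhs => rw [hCeq]
          exact measure_union_le _ _
    _ = volume (⋃ n, P n) := by rw [hdiff0, add_zero]
  have hdisj : Pairwise (Function.onFun Disjoint P) := by
    intro m n hmn
    wlog hlt : m < n generalizing m n
    · exact (this hmn.symm (by omega)).symm
    refine Set.disjoint_left.mpr fun x hxm hxn => ?_
    have h1 := (piece_subset m B hxm).1
    have h2 := (piece_subset n B hxn).2
    have hle : 1 / ((n:ℝ)+1) ≤ 1 / ((m:ℝ)+2) := by
      apply one_div_le_one_div_of_le (by positivity)
      have : (m:ℝ) + 1 ≤ (n:ℝ) := by exact_mod_cast hlt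
      linarith
    linarith
  rw [hvolC, measure_iUnion hdisj hPm]
  have hBI : B ∩ Set.Ico 0 1 = B \ {1} := by
    ext x
    simp only [Set.mem_inter_iff, Set.mem_Ico, Set.mem_diff, Set.mem_singleton_iff]
    constructor
    · rintro ⟨hxB, -, hx1⟩; exact ⟨hxB, by linarith⟩
    · rintro ⟨hxB, hx1⟩
      obtain ⟨h0, h1⟩ := hBsub hxB
      exact ⟨hxB, h0, lt_of_le_of_ne h1 hx1⟩
  have hvolBI : volume (B ∩ Set.Ico 0 1) = volume B := by
    rw [hBI]; exact measure_diff_null Real.volume_singleton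
  have hPn : ∀ n : ℕ, volume (P n)
      = ENNReal.ofReal (1 / (((n:ℝ)+1) * ((n:ℝ)+2))) * volume B := by
    intro n
    have ha : (((n:ℝ)+1) * ((n:ℝ)+2)) ≠ 0 := by positivity
    rw [hP]
    rw [affine_preimage_volume _ _ ha, hvolBI]
    congr 1
    rw [abs_of_pos (by positivity), one_div]
  simp_rw [hPn]
  rw [ENNReal.tsum_mul_right, telescoping, one_mul]

/-- Let `T` be the piecewise linear map `T x = i(i+1)x − i` on `[1/(i+1), 1/i)` with
`T 0 = 0`, `T 1 = 1`, and let `τ = h⁻¹ ∘ T ∘ h` with `h x = 1 − (1−x)²`. Then the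
probability measure with density `g x = 2(1−x)` with respect to Lebesgue measure on `[0,1]`
is `τ`-invariant. -/
theorem stmt18 (T : ℝ → ℝ)
    (hT0 : T 0 = 0) (hT1 : T 1 = 1)
    (hT : ∀ i : ℕ, 1 ≤ i → ∀ x ∈ Set.Ico (1 / ((i:ℝ) + 1)) (1 / (i:ℝ)),
      T x = (i:ℝ) * ((i:ℝ) + 1) * x - (i:ℝ)) :
    ∀ A : Set ℝ, MeasurableSet A → A ⊆ Set.Icc (0:ℝ) 1 →
      ∫ x in (hconjInv ∘ T ∘ hconj) ⁻¹' A, 2 * (1 - x) ∂lam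
        = ∫ x in A, 2 * (1 - x) ∂lam := by
  intro A hA hAsub
  set B : Set ℝ := hconj '' A with hB
  have hconjCont : Continuous hconj := by unfold hconj; continuity
  have hBm : MeasurableSet B :=
    hA.image_of_continuousOn_injOn hconjCont.continuousOn (hconj_injOn.mono hAsub)
  have hBsub : B ⊆ Set.Icc (0:ℝ) 1 := by
    rintro _ ⟨x, hx, rfl⟩; exact hconj_mem (hAsub hx)
  obtain ⟨hCm, hCvol⟩ := T_invariance T hT B hBm hBsub
  set C : Set ℝ := T ⁻¹' B ∩ Set.Icc 0 1 with hC
  set C' : Set ℝ := C \ {1} with hC'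
  have hC'm : MeasurableSet C' := hCm.diff (measurableSet_singleton 1)
  have hC'sub : C' ⊆ Set.Icc (0:ℝ) 1 := fun x hx => hx.1.2
  -- the key set identity
  have hSet : (hconjInv ∘ T ∘ hconj) ⁻¹' A ∩ Set.Icc 0 1 = hconjInv '' C := by
    ext x
    simp only [Set.mem_inter_iff, Set.mem_preimage, Function.comp_apply, Set.mem_image]
    constructor
    · rintro ⟨hxA, hxI⟩
      have hy : hconj x ∈ Set.Icc (0:ℝ) 1 := hconj_mem hxI
      have ht : T (hconj x) ∈ Set.Icc (0:ℝ) 1 := T_mem T hT0 hT1 hT hy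
      refine ⟨hconj x, ⟨?_, hy⟩, hconjInv_hconj hxI⟩
      exact ⟨hconjInv (T (hconj x)), hxA, hconj_hconjInv ht.2⟩
    · rintro ⟨y, ⟨hyB, hyI⟩, rfl⟩
      obtain ⟨a, haA, hay⟩ := hyB
      have haI := hAsub haA
      refine ⟨?_, hconjInv_mem hyI⟩
      rw [hconj_hconjInv hyI.2, ← hay, hconjInv_hconj haI]
      exact haA
  -- rewrite both integrals over `lam` as integrals over `volume`
  rw [show lam = MeasureTheory.volume.restrict (Set.Icc 0 1) from rfl]
  rw [Measure.restrict_restrict' measurableSet_Icc,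
    Measure.restrict_restrict' measurableSet_Icc]
  rw [Set.inter_eq_self_of_subset_left hAsub, hSet]
  -- replace the image of `C` by the image of `C' = C \ {1}`
  have hae : hconjInv '' C =ᵐ[volume] hconjInv '' C' := by
    rw [ae_eq_set]
    constructor
    · refine measure_mono_null (show hconjInv '' C \ hconjInv '' C' ⊆ ({1} : Set ℝ)
        from fun x hx => ?_) Real.volume_singleton
      obtain ⟨⟨y, hyC, rfl⟩, hnot⟩ := hx
      by_cases hy1 : y = 1
      · subst hy1
        simp [hconjInv]
      · exact absurd ⟨y, ⟨hyC, hy1⟩, rfl⟩ hnot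
    · refine measure_mono_null (fun x hx => absurd ?_ hx.2) (measure_empty)
      exact Set.image_mono Set.diff_subset hx.1
  rw [setIntegral_congr_set hae]
  -- change of variables on the left
  have hderiv : ∀ y ∈ C', HasDerivWithinAt hconjInv
      (1 / (2 * Real.sqrt (1 - y))) C' y := by
    intro y hy
    have hy1 : y < 1 := lt_of_le_of_ne (hC'sub hy).2 hy.2
    exact (hconjInv_hasDerivAt hy1).hasDerivWithinAt
  have hinj : Set.InjOn hconjInv C' := hconjInv_injOn.mono hC'sub
  rw [integral_image_eq_integral_abs_deriv_smul hC'm hderiv hinj (fun x => 2 * (1 - x))]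
  have hone : ∀ y ∈ C', |1 / (2 * Real.sqrt (1 - y))| • (2 * (1 - hconjInv y)) = 1 := by
    intro y hy
    have hy1 : y < 1 := lt_of_le_of_ne (hC'sub hy).2 hy.2
    have hs : 0 < Real.sqrt (1 - y) := Real.sqrt_pos.mpr (by linarith)
    simp only [hconjInv, smul_eq_mul]
    rw [abs_of_pos (by positivity)]
    field_simp
    ring
  rw [setIntegral_congr_fun hC'm hone]
  -- change of variables on the right
  have hderivA : ∀ x ∈ A, HasDerivWithinAt hconj (2 * (1 - x)) A x :=
    fun x _ => (hconj_hasDerivAt x).hasDerivWithinAt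
  have hinjA : Set.InjOn hconj A := hconj_injOn.mono hAsub
  have hRHS := integral_image_eq_integral_abs_deriv_smul hA hderivA hinjA
    (fun _ => (1:ℝ))
  rw [← hB] at hRHS
  have hRHS2 : ∫ x in A, |2 * (1 - x)| • (1:ℝ) ∂volume = ∫ x in A, 2 * (1 - x) ∂volume := by
    refine setIntegral_congr_fun hA fun x hx => ?_
    have := (hAsub hx).2
    rw [smul_eq_mul, mul_one, abs_of_nonneg (by linarith)]
  rw [← hRHS2, ← hRHS]
  -- both sides are now constants times measures
  rw [setIntegral_const, setIntegral_const]
  have hvolC' : volume C' = volume B := by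
    rw [hC']
    rw [measure_diff_null Real.volume_singleton]
    exact hCvol
  rw [measureReal_def, measureReal_def, hvolC']
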